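/- For all ψ∈F, all integers k≥1, and all b,c∈A, and for each fixed choice of sign ±: D^±(ψ, |ψ|·χ_b, k·χ_c) = Σ_{χ∈P_k(ψ)} ∏_{φ∈F} ( m(φ) (x^±⊗ c·b^{|φ|}·π(φ)) )^{(χ(φ))} in U(sl₂⊗A). -/

import Mathlib

open scoped TensorProduct
open Finsupp
open scoped Classical

noncomputable section

namespace MapAlgebra

/-- the divided power `u^{(r)} = u^r / r!` in a `ℂ`-algebra. -/
def dp {S : Type*} [Ring S] [Algebra ℂ S] (u : S) (r : ℕ) : S :=
  (r.factorial : ℂ)⁻¹ • u ^ r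

variable {A : Type*} [CommRing A] [Algebra ℂ A]

/-- `|ψ| = Σ_a ψ(a)` for a multiset `ψ` of elements of `A`. -/
def wt (ψ : A →₀ ℕ) : ℕ := ψ.sum fun _ n => n

/-- `π(ψ) = ∏_a a^{ψ(a)}`. -/
def piF (ψ : A →₀ ℕ) : A := ψ.prod fun a n => a ^ n

/-- `m(ψ) = |ψ|! / ∏_a ψ(a)!`. -/
def mF (ψ : A →₀ ℕ) : ℕ := Finsupp.multinomial ψ

variable {L : Type*} [LieRing L] [LieAlgebra ℂ L]

instance : LieAlgebra ℂ (A ⊗[ℂ] L) where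
  lie_smul c x y := by
    rw [← algebraMap_smul A c y, lie_smul, algebraMap_smul]

/-- The universal enveloping algebra `U(L ⊗ A)` of the map algebra `L ⊗ A`
(realized as `A ⊗[ℂ] L` with bracket `[a ⊗ z, b ⊗ z'] = ab ⊗ [z,z']`). -/
abbrev UEA (A : Type*) [CommRing A] [Algebra ℂ A]
    (L : Type*) [LieRing L] [LieAlgebra ℂ L] : Type _ :=
  UniversalEnvelopingAlgebra ℂ (A ⊗[ℂ] L)

/-- The element `v ⊗ a` of the map algebra, viewed inside `U(L ⊗ A)`. -/
def el (a : A) (v : L) : UEA A L :=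
  UniversalEnvelopingAlgebra.ι ℂ (a ⊗ₜ[ℂ] v)

lemma commute_el (a b : A) (v : L) : Commute (el a v : UEA A L) (el b v) := by
  letI := LieRing.ofAssociativeRing (A := UEA A L)
  have h := (UniversalEnvelopingAlgebra.ι ℂ).map_lie (a ⊗ₜ[ℂ] v) (b ⊗ₜ[ℂ] v)
  rw [LieAlgebra.ExtendScalars.bracket_tmul, lie_self, TensorProduct.tmul_zero, map_zero,
    Ring.lie_def] at h
  exact (sub_eq_zero.mp h.symm)

lemma commute_dp {S : Type*} [Ring S] [Algebra ℂ S] {u w : S} (h : Commute u w)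
    (r s : ℕ) : Commute (dp u r) (dp w s) :=
  ((h.pow_pow r s).smul_left _).smul_right _

/-- `x^±(ψ) = ∏_a (x^± ⊗ a)^{(ψ(a))}` (generic in the element `v` of `L`);
the factors pairwise commute, so the product is unambiguous. -/
def xProd (v : L) (ψ : A →₀ ℕ) : UEA A L :=
  ψ.support.noncommProd (fun a => dp (el a v) (ψ a))
    (fun a _ b _ _ => commute_dp (commute_el a b v) _ _)

/-- the predicate characterizing the recursively defined family
`p : F × F → U(L ⊗ A)` (relative to a choice `v` playing the role of `h`). -/
def IsP (v : L) (p : (A →₀ ℕ) → (A →₀ ℕ) → UEA A L) : Prop :=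
  p 0 0 = 1 ∧
  (∀ φ χ, wt φ ≠ wt χ → p φ χ = 0) ∧
  (∀ φ χ, φ ≠ 0 → χ ≠ 0 → wt φ = wt χ →
    p φ χ = -((wt φ : ℂ)⁻¹) •
      ∑ ψ₁ ∈ (Finset.Iic φ).erase 0, ∑ ψ₂ ∈ (Finset.Iic χ).erase 0,
        ((mF ψ₁ * mF ψ₂ : ℕ) : ℂ) • (el (piF ψ₁ * piF ψ₂) v * p (φ - ψ₁) (χ - ψ₂)))

/-- `p(χ) = p(χ, |χ|·χ₁)`. -/
def pOne (p : (A →₀ ℕ) → (A →₀ ℕ) → UEA A L) (χ : A →₀ ℕ) : UEA A L :=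
  p χ (Finsupp.single (1 : A) (wt χ))

/-- the predicate characterizing the recursively defined family
`D^± : F³ → U(L ⊗ A)` (relative to a choice `v` playing the role of `x^±`). -/
def IsD (v : L) (D : (A →₀ ℕ) → (A →₀ ℕ) → (A →₀ ℕ) → UEA A L) : Prop :=
  (D 0 0 0 = 1) ∧
  (∀ ψ₁ ψ₂ : A →₀ ℕ, ¬(ψ₁ = 0 ∧ ψ₂ = 0) → D ψ₁ ψ₂ 0 = 0) ∧
  (∀ (ψ₁ ψ₂ : A →₀ ℕ) (b : A), D ψ₁ ψ₂ (Finsupp.single b 1) =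
      if wt ψ₁ = wt ψ₂ then ((mF ψ₁ * mF ψ₂ : ℕ) : ℂ) • el (b * (piF ψ₁ * piF ψ₂)) v
      else 0) ∧
  (∀ ψ₁ ψ₂ ψ₃ : A →₀ ℕ, 2 ≤ wt ψ₃ →
    D ψ₁ ψ₂ ψ₃ = (wt ψ₃ : ℂ)⁻¹ •
      ∑ φ₁ ∈ Finset.Iic ψ₁, ∑ φ₂ ∈ Finset.Iic ψ₂, ∑ b ∈ ψ₃.support,
        D φ₁ φ₂ (Finsupp.single b 1) *
          D (ψ₁ - φ₁) (ψ₂ - φ₂) (ψ₃ - Finsupp.single b 1))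

/-- `𝔻(ψ₁,ψ₂,ψ₃) = Σ_{φ₁≤ψ₁} Σ_{φ₂≤ψ₂} p(φ₁,φ₂) D⁺(ψ₁−φ₁,ψ₂−φ₂,ψ₃)`. -/
def DD (p : (A →₀ ℕ) → (A →₀ ℕ) → UEA A L)
    (Dp : (A →₀ ℕ) → (A →₀ ℕ) → (A →₀ ℕ) → UEA A L)
    (ψ₁ ψ₂ ψ₃ : A →₀ ℕ) : UEA A L :=
  ∑ φ₁ ∈ Finset.Iic ψ₁, ∑ φ₂ ∈ Finset.Iic ψ₂,
    p φ₁ φ₂ * Dp (ψ₁ - φ₁) (ψ₂ - φ₂) ψ₃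

/-- the Lie algebra `sl₂` presented by a basis `x⁻ = b 0`, `h = b 1`, `x⁺ = b 2`
with `[h,x^±] = ±2x^±`, `[x⁺,x⁻] = h`. -/
structure Sl2Data (L : Type*) [LieRing L] [LieAlgebra ℂ L] where
  b : Module.Basis (Fin 3) ℂ L
  lie_h_xp : ⁅b 1, b 2⁆ = (2 : ℂ) • b 2
  lie_h_xm : ⁅b 1, b 0⁆ = (-2 : ℂ) • b 0
  lie_xp_xm : ⁅b 2, b 0⁆ = b 1

/-- `x⁻`. -/
def Sl2Data.xm (S : Sl2Data L) : L := S.b 0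
/-- `h`. -/
def Sl2Data.h (S : Sl2Data L) : L := S.b 1
/-- `x⁺`. -/
def Sl2Data.xp (S : Sl2Data L) : L := S.b 2

/-- The data of a root system and Chevalley basis for a (finite-dimensional simple)
complex Lie algebra `g`: a Cartan subalgebra `H`, the roots `R`, the positive roots
`Rpos` enumerated as `β 0, …, β (m-1)`, simple roots `α 0, …, α (n-1)`, root vectors
`x s γ` (`s = true` for `x_γ⁺`, `s = false` for `x_γ⁻`), coroots, integral Cartan
pairing, and structure constants `±(p+1)`. -/
structure ChevalleyData (g : Type*) [LieRing g] [LieAlgebra ℂ g] where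
  n : ℕ
  m : ℕ
  H : LieSubalgebra ℂ g
  cartan : H.IsCartanSubalgebra
  R : Set (Module.Dual ℂ H)
  Rpos : Set (Module.Dual ℂ H)
  β : Fin m → Module.Dual ℂ H
  β_inj : Function.Injective β
  Rpos_eq : Rpos = Set.range β
  α : Fin n → Module.Dual ℂ H
  α_mem : ∀ i, α i ∈ Rpos
  R_eq : R = Rpos ∪ (fun γ => -γ) '' Rpos
  x : Bool → Module.Dual ℂ H → g
  coroot : Module.Dual ℂ H → H
  chevBasis : Module.Basis ((Fin m × Bool) ⊕ Fin n) ℂ g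
  chevBasis_x : ∀ (k : Fin m) (s : Bool), chevBasis (Sum.inl (k, s)) = x s (β k)
  chevBasis_h : ∀ i : Fin n, chevBasis (Sum.inr i) = (coroot (α i) : g)
  rootvec_pos : ∀ γ ∈ Rpos, ∀ t : H, ⁅(t : g), x true γ⁆ = γ t • x true γ
  rootvec_neg : ∀ γ ∈ Rpos, ∀ t : H, ⁅(t : g), x false γ⁆ = -(γ t) • x false γ
  coroot_def : ∀ γ ∈ Rpos, ⁅x true γ, x false γ⁆ = (coroot γ : g)
  pairing : Module.Dual ℂ H → Module.Dual ℂ H → ℤ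
  pairing_eq : ∀ γ ∈ Rpos, ∀ δ ∈ R, δ (coroot γ) = (pairing γ δ : ℂ)
  pairing_self : ∀ γ ∈ Rpos, pairing γ γ = 2
  struct : ∀ γ δ, γ ∈ Rpos → δ ∈ Rpos → γ + δ ∈ R → ∃ (c : ℤ) (pm : ℕ),
    (δ - (pm : ℤ) • γ ∈ R) ∧ (∀ q : ℕ, δ - (q : ℤ) • γ ∈ R → q ≤ pm) ∧
    (c = pm + 1 ∨ c = -(pm + 1)) ∧
    ⁅x true γ, x true δ⁆ = (c : ℂ) • x true (γ + δ) ∧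
    ⁅x false γ, x false δ⁆ = (-c : ℂ) • x false (γ + δ)

/-- `ψ ∈ F(𝔹)`: the multiset `ψ` is supported on the basis `𝔹 = range bA` of `A`. -/
def SuppB {ιA : Type*} (bA : Module.Basis ιA ℂ A) (ψ : A →₀ ℕ) : Prop :=
  ∀ a ∈ ψ.support, a ∈ Set.range bA

variable {g : Type*} [LieRing g] [LieAlgebra ℂ g]

/-- The integral form `U_ℤ(g ⊗ A)`: the `ℤ`-subalgebra of `U(g ⊗ A)` generated by all
divided powers `(x_α^± ⊗ b)^{(r)}`, `α ∈ R⁺`, `b ∈ 𝔹`, `r ∈ ℕ`. -/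
def UZ (C : ChevalleyData g) {ιA : Type*} (bA : Module.Basis ιA ℂ A) : Subalgebra ℤ (UEA A g) :=
  Algebra.adjoin ℤ {u : UEA A g | ∃ (k : Fin C.m) (s : Bool) (i : ιA) (r : ℕ),
    u = dp (el (bA i) (C.x s (C.β k))) r}

/-- `U_ℤ^±(g ⊗ A)` (one sign `s` only). -/
def UZpm (C : ChevalleyData g) {ιA : Type*} (bA : Module.Basis ιA ℂ A) (s : Bool) :
    Subalgebra ℤ (UEA A g) :=
  Algebra.adjoin ℤ {u : UEA A g | ∃ (k : Fin C.m) (i : ιA) (r : ℕ),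
    u = dp (el (bA i) (C.x s (C.β k))) r}


/-- generalized binomial coefficient `C(z,k) = z(z-1)⋯(z-k+1)/k!` (as a complex scalar). -/
def cchoose (z : ℂ) (k : ℕ) : ℂ :=
  (k.factorial : ℂ)⁻¹ * ∏ j ∈ Finset.range k, (z - (j : ℂ))

/-- the (finite) set `P_k(ψ)` of partitions of `ψ` into `k` parts,
i.e. finitely supported `χ : F → ℕ` with `Σ_φ χ(φ)·φ = ψ` and `Σ_φ χ(φ) = k`. -/
def partitions (ψ : A →₀ ℕ) (k : ℕ) : Finset ((A →₀ ℕ) →₀ ℕ) :=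
  (Finset.Iic ((Finset.Iic ψ).sum fun φ => Finsupp.single φ k)).filter
    (fun χ => (χ.sum fun φ c => c • φ) = ψ ∧ (χ.sum fun _ c => c) = k)

/-- the (finite) set `S_k(χ)` of finitely supported `ψ : F → ℕ` with
`Σ_φ ψ(φ)·φ ≤ χ` and `Σ_φ ψ(φ) = k`. -/
def subPartitions (χ : A →₀ ℕ) (k : ℕ) : Finset ((A →₀ ℕ) →₀ ℕ) :=
  (Finset.Iic ((Finset.Iic χ).sum fun φ => Finsupp.single φ k)).filter
    (fun ψ => (ψ.sum fun φ c => c • φ) ≤ χ ∧ (ψ.sum fun _ c => c) = k)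

/-- `U_ℤ^0(g ⊗ A)`: the `ℤ`-subalgebra generated by the `p_i(χ)`, `χ ∈ F(𝔹)`,
where `P i` is the family `p_i` (defined by recursion relative to `h_{α_i}`). -/
def UZ0 (C : ChevalleyData g) {ιA : Type*} (bA : Module.Basis ιA ℂ A)
    (P : Fin C.n → (A →₀ ℕ) → (A →₀ ℕ) → UEA A g) : Subalgebra ℤ (UEA A g) :=
  Algebra.adjoin ℤ {u : UEA A g | ∃ (i : Fin C.n) (χ : A →₀ ℕ), SuppB bA χ ∧ u = pOne (P i) χ}

/-! Unfolding the recursion for `D(ψ, |ψ|·χ_b, (k+1)·χ_c)`, the factor `D(φ, j·χ_b, χ_c)`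
vanishes unless `j = |φ|`, and is then `f(φ) = m(φ) (x^± ⊗ c b^{|φ|} π(φ))`. By induction on `k`
it remains to show
  `Σ_{φ ≤ ψ} f(φ) Σ_{χ ∈ P_k(ψ - φ)} f^{(χ)} = (k+1) Σ_{χ ∈ P_{k+1}(ψ)} f^{(χ)}`
for the commuting family `f`. Since `f(φ) f(φ)^{(r)} = (r+1) f(φ)^{(r+1)}`, the term for `(φ, χ)`
is `(χ + χ_φ)(φ)` times the monomial of `χ + χ_φ`; every partition of `ψ` into `k+1` parts arises
from each of its parts `φ` in this way, and the multiplicities `χ(φ)` add up to `k+1`. -/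

section DividedPowers

variable {S : Type*} [Ring S] [Algebra ℂ S]

@[simp] lemma dp_zero (u : S) : dp u 0 = 1 := by simp [dp]

@[simp] lemma dp_one (u : S) : dp u 1 = u := by simp [dp]

lemma mul_dp (u : S) (r : ℕ) : u * dp u r = ((r + 1 : ℕ) : ℂ) • dp u (r + 1) := by
  have hr : ((r + 1 : ℕ) : ℂ) ≠ 0 := by exact_mod_cast r.succ_ne_zero
  rw [dp, dp, mul_smul_comm, smul_smul, ← pow_succ', Nat.factorial_succ, Nat.cast_mul, mul_inv,
    ← mul_assoc, mul_inv_cancel₀ hr, one_mul]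

variable {ι : Type*} (f : ι → S) (hf : ∀ i j, Commute (f i) (f j))

def dpMonomial (χ : ι →₀ ℕ) : S :=
  χ.support.noncommProd (fun i => dp (f i) (χ i)) (fun i _ j _ _ => commute_dp (hf i j) _ _)

lemma dpMonomial_eq_noncommProd {χ : ι →₀ ℕ} {s : Finset ι} (hs : χ.support ⊆ s)
    (hc : (s : Set ι).Pairwise (Function.onFun Commute fun i => dp (f i) (χ i))) :
    dpMonomial f hf χ = s.noncommProd (fun i => dp (f i) (χ i)) hc := by
  have hc' (t : Finset ι) : (t : Set ι).Pairwise (Function.onFun Commute fun i => dp (f i) (χ i)) :=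
    fun i _ j _ _ => commute_dp (hf i j) _ _
  have hrest : (s \ χ.support).noncommProd (fun i => dp (f i) (χ i)) (hc' _) = 1 := by
    refine (Finset.noncommProd_eq_pow_card _ _ _ 1 fun i hi => ?_).trans (one_pow _)
    rw [Finsupp.notMem_support_iff.mp (Finset.mem_sdiff.mp hi).2, dp_zero]
  calc dpMonomial f hf χ
      = χ.support.noncommProd (fun i => dp (f i) (χ i)) (hc' _) *
          (s \ χ.support).noncommProd (fun i => dp (f i) (χ i)) (hc' _) := by
        rw [hrest, mul_one]; rfl
    _ = (χ.support ∪ (s \ χ.support)).noncommProd (fun i => dp (f i) (χ i)) (hc' _) :=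
        (Finset.noncommProd_union_of_disjoint Finset.disjoint_sdiff _ _).symm
    _ = _ := Finset.noncommProd_congr (Finset.union_sdiff_of_subset hs) (fun _ _ => rfl) _

lemma dpMonomial_single (i : ι) (n : ℕ) : dpMonomial f hf (Finsupp.single i n) = dp (f i) n := by
  rw [dpMonomial_eq_noncommProd f hf Finsupp.support_single_subset
      (fun _ _ _ _ _ => commute_dp (hf _ _) _ _),
    Finset.noncommProd_singleton, Finsupp.single_eq_same]

lemma mul_dpMonomial (χ : ι →₀ ℕ) (i : ι) :
    f i * dpMonomial f hf χ = ((χ i + 1 : ℕ) : ℂ) • dpMonomial f hf (χ + Finsupp.single i 1) := by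
  set χ' := χ + Finsupp.single i 1
  set s := insert i χ.support
  have hc (e : ι →₀ ℕ) (t : Finset ι) :
      (t : Set ι).Pairwise (Function.onFun Commute fun i => dp (f i) (e i)) :=
    fun j _ k _ _ => commute_dp (hf j k) _ _
  have hχ' : χ'.support ⊆ s := by
    intro j hj
    by_cases hji : j = i
    · exact hji ▸ Finset.mem_insert_self _ _
    · refine Finset.mem_insert_of_mem (Finsupp.mem_support_iff.mpr ?_)
      simpa [χ', Finsupp.single_apply, Ne.symm hji] using hj
  have hrest : (s.erase i).noncommProd (fun j => dp (f j) (χ' j)) (hc _ _) =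
      (s.erase i).noncommProd (fun j => dp (f j) (χ j)) (hc _ _) :=
    Finset.noncommProd_congr rfl (fun j hj => by
      simp [χ', Ne.symm (Finset.ne_of_mem_erase hj)]) _
  rw [dpMonomial_eq_noncommProd f hf (Finset.subset_insert i χ.support) (hc _ _),
    dpMonomial_eq_noncommProd f hf hχ' (hc _ _),
    ← Finset.mul_noncommProd_erase _ (Finset.mem_insert_self i _),
    ← Finset.mul_noncommProd_erase _ (Finset.mem_insert_self i _), hrest, ← mul_assoc, mul_dp,
    smul_mul_assoc, Finsupp.add_apply, Finsupp.single_eq_same]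

end DividedPowers

section FinitelySupported

variable {ι : Type*}

@[simp] lemma wt_single (a : ι) (n : ℕ) : wt (Finsupp.single a n) = n :=
  Finsupp.degree_single a n

lemma wt_mono {φ ψ : ι →₀ ℕ} (h : φ ≤ ψ) : wt φ ≤ wt ψ :=
  Finsupp.degree_mono h

lemma wt_tsub {φ ψ : ι →₀ ℕ} (h : φ ≤ ψ) : wt (ψ - φ) = wt ψ - wt φ := by
  have : (ψ - φ).degree + φ.degree = ψ.degree := by rw [← map_add, tsub_add_cancel_of_le h]
  exact Nat.eq_sub_of_add_eq this

@[simp] lemma mF_single (a : ι) (n : ℕ) : mF (Finsupp.single a n) = 1 := by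
  rw [mF, Finsupp.multinomial_eq_of_support_subset Finsupp.support_single_subset,
    Nat.multinomial_singleton]

@[simp] lemma piF_single {R : Type*} [CommRing R] (a : R) (n : ℕ) :
    piF (Finsupp.single a n) = a ^ n :=
  Finsupp.prod_single_index (pow_zero a)

lemma Iic_single (a : ι) (n : ℕ) :
    Finset.Iic (Finsupp.single a n) =
      (Finset.Iic n).map ⟨Finsupp.single a, Finsupp.single_injective a⟩ := by
  ext φ
  simp only [Finset.mem_Iic, Finset.mem_map, Function.Embedding.coeFn_mk]
  constructor
  · intro h
    have hφ : φ = Finsupp.single a (φ a) := Finsupp.support_subset_singleton.mp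
      ((Finsupp.support_mono h).trans Finsupp.support_single_subset)
    exact ⟨φ a, by simpa using h a, hφ.symm⟩
  · rintro ⟨j, hj, rfl⟩
    exact Finsupp.single_le_single.mpr hj

lemma le_linearCombination_id {M : Type*} [AddCommMonoid M] [PartialOrder M]
    [CanonicallyOrderedAdd M] {χ : M →₀ ℕ} {φ : M} (hφ : φ ∈ χ.support) :
    φ ≤ Finsupp.linearCombination ℕ id χ :=
  (le_self_nsmul zero_le (Finsupp.mem_support_iff.mp hφ)).trans
    (Finset.single_le_sum_of_canonicallyOrdered (f := fun φ => χ φ • φ) hφ)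

end FinitelySupported

section Partitions

variable {α : Type*} {ψ φ : α →₀ ℕ} {k : ℕ} {χ : (α →₀ ℕ) →₀ ℕ}

lemma mem_partitions :
    χ ∈ partitions ψ k ↔ Finsupp.linearCombination ℕ id χ = ψ ∧ χ.degree = k := by
  refine Finset.mem_filter.trans ⟨fun h => h.2, fun h => ⟨Finset.mem_Iic.mpr fun φ => ?_, h⟩⟩
  rcases eq_or_ne (χ φ) 0 with h0 | h0
  · simp [h0]
  have hφ : φ ≤ ψ := h.1 ▸ le_linearCombination_id (Finsupp.mem_support_iff.mpr h0)
  simp only [Finsupp.finsetSum_apply, Finsupp.single_apply, Finset.sum_ite_eq', Finset.mem_Iic,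
    if_pos hφ]
  exact h.2 ▸ Finsupp.le_degree φ χ

lemma le_of_mem_partitions (hχ : χ ∈ partitions ψ k) (hφ : φ ∈ χ.support) : φ ≤ ψ :=
  (mem_partitions.mp hχ).1 ▸ le_linearCombination_id hφ

lemma partitions_one (ψ : α →₀ ℕ) : partitions ψ 1 = {Finsupp.single ψ 1} := by
  ext χ
  rw [mem_partitions, Finset.mem_singleton]
  constructor
  · rintro ⟨hsum, hcount⟩
    obtain ⟨φ, rfl⟩ := (Finsupp.sum_eq_one_iff χ).mp hcount
    rw [Finsupp.linearCombination_single, one_smul, id] at hsum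
    rw [hsum]
  · rintro rfl
    simp

lemma add_single_mem_partitions (hφ : φ ≤ ψ) (hχ : χ ∈ partitions (ψ - φ) k) :
    χ + Finsupp.single φ 1 ∈ partitions ψ (k + 1) := by
  obtain ⟨hsum, hcount⟩ := mem_partitions.mp hχ
  rw [mem_partitions, map_add, map_add, hsum, hcount, Finsupp.linearCombination_single, one_smul,
    id, tsub_add_cancel_of_le hφ, Finsupp.degree_single]
  exact ⟨rfl, rfl⟩

lemma sub_single_mem_partitions (hχ : χ ∈ partitions ψ (k + 1)) (hφ : φ ∈ χ.support) :
    χ - Finsupp.single φ 1 ∈ partitions (ψ - φ) k := by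
  obtain ⟨hsum, hcount⟩ := mem_partitions.mp hχ
  rw [← Finsupp.sub_add_single_one_cancel (Finsupp.mem_support_iff.mp hφ), map_add,
    Finsupp.linearCombination_single, one_smul, id] at hsum
  rw [← Finsupp.sub_add_single_one_cancel (Finsupp.mem_support_iff.mp hφ), map_add,
    Finsupp.degree_single] at hcount
  exact mem_partitions.mpr ⟨eq_tsub_of_add_eq hsum, by omega⟩

lemma sum_partitions_succ {M : Type*} [AddCommMonoid M]
    (G : ((α →₀ ℕ) →₀ ℕ) → (α →₀ ℕ) → M) (ψ : α →₀ ℕ) (k : ℕ) :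
    ∑ φ ∈ Finset.Iic ψ, ∑ χ ∈ partitions (ψ - φ) k, G (χ + Finsupp.single φ 1) φ =
      ∑ χ ∈ partitions ψ (k + 1), ∑ φ ∈ χ.support, G χ φ := by
  rw [Finset.sum_sigma', Finset.sum_sigma']
  refine Finset.sum_nbij' (fun x => ⟨x.2 + Finsupp.single x.1 1, x.1⟩)
    (fun y => ⟨y.2, y.1 - Finsupp.single y.2 1⟩) ?_ ?_ ?_ ?_ (fun _ _ => rfl)
  · rintro ⟨φ, χ⟩ hx
    simp only [Finset.mem_sigma, Finset.mem_Iic] at hx ⊢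
    refine ⟨add_single_mem_partitions hx.1 hx.2, ?_⟩
    simp
  · rintro ⟨χ, φ⟩ hy
    simp only [Finset.mem_sigma, Finset.mem_Iic] at hy ⊢
    exact ⟨le_of_mem_partitions hy.1 hy.2, sub_single_mem_partitions hy.1 hy.2⟩
  · rintro ⟨φ, χ⟩ _
    simp
  · rintro ⟨χ, φ⟩ hy
    simp [Finsupp.sub_add_single_one_cancel (Finsupp.mem_support_iff.mp (Finset.mem_sigma.mp hy).2)]

end Partitions

lemma sum_Iic_mul_sum_partitions {S : Type*} [Ring S] [Algebra ℂ S] {α : Type*}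
    (f : (α →₀ ℕ) → S) (hf : ∀ i j, Commute (f i) (f j)) (ψ : α →₀ ℕ) (k : ℕ) :
    ∑ φ ∈ Finset.Iic ψ, f φ * ∑ χ ∈ partitions (ψ - φ) k, dpMonomial f hf χ =
      ((k + 1 : ℕ) : ℂ) • ∑ χ ∈ partitions ψ (k + 1), dpMonomial f hf χ := by
  have hmul (φ : α →₀ ℕ) (χ : (α →₀ ℕ) →₀ ℕ) : f φ * dpMonomial f hf χ =
      (((χ + Finsupp.single φ 1 : (α →₀ ℕ) →₀ ℕ) φ : ℕ) : ℂ) •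
        dpMonomial f hf (χ + Finsupp.single φ 1) := by
    rw [mul_dpMonomial, Finsupp.add_apply, Finsupp.single_eq_same]
  have hcount (χ) (hχ : χ ∈ partitions ψ (k + 1)) :
      ∑ φ ∈ χ.support, ((χ φ : ℕ) : ℂ) = ((k + 1 : ℕ) : ℂ) := by
    rw [← Nat.cast_sum, ← Finsupp.degree_apply, (mem_partitions.mp hχ).2]
  simp_rw [Finset.mul_sum, hmul]
  rw [sum_partitions_succ (fun χ φ => ((χ φ : ℕ) : ℂ) • dpMonomial f hf χ), Finset.smul_sum]
  refine Finset.sum_congr rfl fun χ hχ => ?_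
  rw [← Finset.sum_smul, hcount χ hχ]

section DFormula

variable (v : L) (b c : A)

def partitionFactor (φ : A →₀ ℕ) : UEA A L := ((mF φ : ℕ) : ℂ) • el (c * b ^ wt φ * piF φ) v

lemma partitionFactor_commute (φ φ' : A →₀ ℕ) :
    Commute (partitionFactor v b c φ) (partitionFactor v b c φ') :=
  ((commute_el _ _ _).smul_left _).smul_right _

variable {v} {D : (A →₀ ℕ) → (A →₀ ℕ) → (A →₀ ℕ) → UEA A L}

lemma IsD.sum_Iic_single_mul (hD : IsD v D) {φ ψ : A →₀ ℕ} (h : φ ≤ ψ) (ξ : A →₀ ℕ) :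
    ∑ φ₂ ∈ Finset.Iic (Finsupp.single b (wt ψ)),
        D φ φ₂ (Finsupp.single c 1) * D (ψ - φ) (Finsupp.single b (wt ψ) - φ₂) ξ =
      partitionFactor v b c φ * D (ψ - φ) (Finsupp.single b (wt (ψ - φ))) ξ := by
  rw [Iic_single, Finset.sum_map]
  simp only [Function.Embedding.coeFn_mk, hD.2.2.1, wt_single, mF_single, piF_single, mul_one,
    ite_mul, zero_mul, Finset.sum_ite_eq, Finset.mem_Iic, if_pos (wt_mono h)]
  rw [← Finsupp.single_tsub, ← wt_tsub h, partitionFactor, mul_left_comm, mul_comm (piF φ)]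

theorem IsD.apply_single_single (hD : IsD v D) (ψ : A →₀ ℕ) {k : ℕ} (hk : 1 ≤ k) :
    D ψ (Finsupp.single b (wt ψ)) (Finsupp.single c k) =
      ∑ χ ∈ partitions ψ k,
        dpMonomial (partitionFactor v b c) (partitionFactor_commute v b c) χ := by
  induction k, hk using Nat.le_induction generalizing ψ with
  | base =>
    rw [hD.2.2.1, if_pos (wt_single _ _).symm, partitions_one, Finset.sum_singleton,
      dpMonomial_single, dp_one, partitionFactor, mF_single, piF_single, mul_one,
      mul_left_comm, mul_comm (piF ψ)]
  | succ k _ ih =>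
    have hk₁ : ((k + 1 : ℕ) : ℂ) ≠ 0 := Nat.cast_ne_zero.mpr k.succ_ne_zero
    have hc : Finsupp.single c (k + 1) - Finsupp.single c 1 = Finsupp.single c k := by
      rw [← Finsupp.single_tsub, Nat.add_sub_cancel]
    calc D ψ (Finsupp.single b (wt ψ)) (Finsupp.single c (k + 1))
        = ((k + 1 : ℕ) : ℂ)⁻¹ • ∑ φ ∈ Finset.Iic ψ, partitionFactor v b c φ *
            D (ψ - φ) (Finsupp.single b (wt (ψ - φ))) (Finsupp.single c k) := by
          rw [hD.2.2.2 _ _ _ (by rw [wt_single]; omega), wt_single,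
            Finsupp.support_single c k.succ_ne_zero]
          simp only [Finset.sum_singleton, hc]
          congr 1
          exact Finset.sum_congr rfl fun φ hφ =>
            hD.sum_Iic_single_mul b c (Finset.mem_Iic.mp hφ) _
      _ = ((k + 1 : ℕ) : ℂ)⁻¹ • ∑ φ ∈ Finset.Iic ψ, partitionFactor v b c φ *
            ∑ χ ∈ partitions (ψ - φ) k,
              dpMonomial (partitionFactor v b c) (partitionFactor_commute v b c) χ := by
          simp_rw [ih]
      _ = _ := by
          rw [sum_Iic_mul_sum_partitions, smul_smul, inv_mul_cancel₀ hk₁, one_smul]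

end DFormula

/-- explicit formula for `D^±(ψ, |ψ|·χ_b, k·χ_c)` as a sum over
partitions of `ψ` into `k` parts. -/
theorem D_partition_formula (S : Sl2Data L) (sgn : Bool)
    (D : (A →₀ ℕ) → (A →₀ ℕ) → (A →₀ ℕ) → UEA A L)
    (hD : IsD (if sgn then S.xp else S.xm) D)
    (ψ : A →₀ ℕ) (k : ℕ) (hk : 1 ≤ k) (b c : A) :
    D ψ (Finsupp.single b (wt ψ)) (Finsupp.single c k) =
      ∑ χ ∈ partitions ψ k,
        χ.support.noncommProd
          (fun φ => dp (((mF φ : ℕ) : ℂ) •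
              el (c * b ^ wt φ * piF φ) (if sgn then S.xp else S.xm)) (χ φ))
          (fun φ _ φ' _ _ =>
            commute_dp (((commute_el _ _ _).smul_left _).smul_right _) _ _) :=
  hD.apply_single_single b c ψ hk

end MapAlgebra
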